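/- Let F, F₁ be positive definite symmetric matrices and D a positive definite symmetric matrix with D² ≤ F and ‖D⁻¹(F₁ - F)D⁻¹‖ ≤ δ < 1/2. Then for any vector u, ((1 - 2δ)/(1 - δ))‖D F⁻¹ u‖ ≤ ‖D F₁⁻¹ u‖ ≤ (1/(1 - δ))‖D F⁻¹ u‖. -/

import Mathlib

/-! With `x = D F⁻¹ u`, `y = D F₁⁻¹ u` and `E = D⁻¹ (F₁ - F) D⁻¹`, the matrix
`M = D⁻¹ F₁ D⁻¹` satisfies `M (x - y) = E x`. Since `D² ≤ F` gives `D⁻¹ F D⁻¹ ≥ 1`, the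
quadratic form of `M = D⁻¹ F D⁻¹ + E` is at least `(1 - δ) ‖z‖²`, so
`(1 - δ) ‖x - y‖ ≤ ‖E x‖ ≤ δ ‖x‖`, and both bounds follow from the triangle inequality. -/

open scoped Matrix.Norms.L2Operator RealInnerProductSpace
open Matrix

noncomputable def vnorm {p : ℕ} (v : Fin p → ℝ) : ℝ :=
  ‖(WithLp.equiv 2 (Fin p → ℝ)).symm v‖

section

variable {p : ℕ}

lemma vnorm_nonneg (a : Fin p → ℝ) : 0 ≤ vnorm a := norm_nonneg _

lemma dotProduct_eq_inner (a b : Fin p → ℝ) :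
    a ⬝ᵥ b = ⟪(WithLp.equiv 2 (Fin p → ℝ)).symm a, (WithLp.equiv 2 (Fin p → ℝ)).symm b⟫ := by
  simp [PiLp.inner_apply, dotProduct, mul_comm]

lemma abs_vnorm_sub_vnorm_le (a b : Fin p → ℝ) : |vnorm a - vnorm b| ≤ vnorm (a - b) := by
  simpa only [vnorm, WithLp.equiv_symm_apply, WithLp.toLp_sub] using abs_norm_sub_norm_le _ _

lemma vnorm_mulVec_le (A : Matrix (Fin p) (Fin p) ℝ) (v : Fin p → ℝ) :
    vnorm (A *ᵥ v) ≤ ‖A‖ * vnorm v := by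
  simpa [vnorm] using l2_opNorm_mulVec A ((WithLp.equiv 2 (Fin p → ℝ)).symm v)

lemma dotProduct_self_eq_vnorm_sq (a : Fin p → ℝ) : a ⬝ᵥ a = vnorm a ^ 2 := by
  rw [dotProduct_eq_inner, real_inner_self_eq_norm_sq, vnorm]

lemma abs_dotProduct_le_vnorm_mul_vnorm (a b : Fin p → ℝ) : |a ⬝ᵥ b| ≤ vnorm a * vnorm b := by
  rw [dotProduct_eq_inner]
  exact abs_real_inner_le_norm _ _

lemma abs_dotProduct_mulVec_le (A : Matrix (Fin p) (Fin p) ℝ) (z : Fin p → ℝ) :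
    |z ⬝ᵥ A *ᵥ z| ≤ ‖A‖ * (z ⬝ᵥ z) :=
  calc |z ⬝ᵥ A *ᵥ z| ≤ vnorm z * vnorm (A *ᵥ z) := abs_dotProduct_le_vnorm_mul_vnorm _ _
    _ ≤ vnorm z * (‖A‖ * vnorm z) := mul_le_mul_of_nonneg_left (vnorm_mulVec_le _ _) (vnorm_nonneg _)
    _ = ‖A‖ * (z ⬝ᵥ z) := by rw [dotProduct_self_eq_vnorm_sq]; ring

lemma mul_vnorm_le_vnorm_mulVec {A : Matrix (Fin p) (Fin p) ℝ} {c : ℝ}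
    (hA : ∀ z, c * (z ⬝ᵥ z) ≤ z ⬝ᵥ A *ᵥ z) (z : Fin p → ℝ) :
    c * vnorm z ≤ vnorm (A *ᵥ z) := by
  have hsq : c * vnorm z ^ 2 ≤ vnorm z * vnorm (A *ᵥ z) := by
    rw [← dotProduct_self_eq_vnorm_sq]
    exact (hA z).trans ((le_abs_self _).trans (abs_dotProduct_le_vnorm_mul_vnorm _ _))
  rcases (vnorm_nonneg z).eq_or_lt with hz | hz
  · rw [← hz, mul_zero]
    exact vnorm_nonneg _
  · nlinarith

lemma dotProduct_self_le_of_sq_le {F D : Matrix (Fin p) (Fin p) ℝ} (hD : D.IsHermitian)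
    (hDdet : IsUnit D.det) (hFD : (F - D ^ 2).PosSemidef) (z : Fin p → ℝ) :
    z ⬝ᵥ z ≤ z ⬝ᵥ (D⁻¹ * F * D⁻¹) *ᵥ z := by
  have hconj : D⁻¹ * (F - D ^ 2) * D⁻¹ = D⁻¹ * F * D⁻¹ - 1 := by
    rw [mul_sub, sub_mul, pow_two, ← mul_assoc, nonsing_inv_mul _ hDdet, one_mul,
      mul_nonsing_inv _ hDdet]
  have hnonneg := (hFD.conjTranspose_mul_mul_same D⁻¹).dotProduct_mulVec_nonneg z
  rw [hD.inv.eq, hconj, sub_mulVec, one_mulVec, dotProduct_sub, star_trivial] at hnonneg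
  linarith

lemma one_sub_mul_dotProduct_le {F F₁ D : Matrix (Fin p) (Fin p) ℝ} {δ : ℝ}
    (hD : D.IsHermitian) (hDdet : IsUnit D.det) (hFD : (F - D ^ 2).PosSemidef)
    (h : ‖D⁻¹ * (F₁ - F) * D⁻¹‖ ≤ δ) (z : Fin p → ℝ) :
    (1 - δ) * (z ⬝ᵥ z) ≤ z ⬝ᵥ (D⁻¹ * F₁ * D⁻¹) *ᵥ z := by
  have hsplit : D⁻¹ * F₁ * D⁻¹ = D⁻¹ * F * D⁻¹ + D⁻¹ * (F₁ - F) * D⁻¹ := by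
    rw [mul_sub, sub_mul]; abel
  have hE := (abs_le.mp (abs_dotProduct_mulVec_le (D⁻¹ * (F₁ - F) * D⁻¹) z)).1
  have hzz : 0 ≤ z ⬝ᵥ z := by rw [dotProduct_self_eq_vnorm_sq]; positivity
  rw [hsplit, add_mulVec, dotProduct_add]
  nlinarith [dotProduct_self_le_of_sq_le hD hDdet hFD z]

lemma conj_mul_sub_eq {F F₁ D : Matrix (Fin p) (Fin p) ℝ} (hD : IsUnit D.det)
    (hF : IsUnit F.det) (hF₁ : IsUnit F₁.det) :
    D⁻¹ * F₁ * D⁻¹ * (D * F⁻¹ - D * F₁⁻¹) = D⁻¹ * (F₁ - F) * D⁻¹ * (D * F⁻¹) := by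
  simp only [mul_sub, sub_mul, mul_assoc, nonsing_inv_mul_cancel_left _ _ hD,
    mul_nonsing_inv _ hF₁, mul_nonsing_inv _ hF]

end

theorem stmt_5 {p : ℕ} (F F₁ D : Matrix (Fin p) (Fin p) ℝ)
    (hF : F.PosDef) (hF₁ : F₁.PosDef) (hD : D.PosDef)
    (hLoewner : (F - D ^ 2).PosSemidef)
    (δ : ℝ) (hδ : δ < 1 / 2) (h : ‖D⁻¹ * (F₁ - F) * D⁻¹‖ ≤ δ) (u : Fin p → ℝ) :
    ((1 - 2 * δ) / (1 - δ)) * vnorm (D *ᵥ F⁻¹ *ᵥ u) ≤ vnorm (D *ᵥ F₁⁻¹ *ᵥ u) ∧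
      vnorm (D *ᵥ F₁⁻¹ *ᵥ u) ≤ (1 / (1 - δ)) * vnorm (D *ᵥ F⁻¹ *ᵥ u) := by
  have hDdet := (isUnit_iff_isUnit_det D).mp hD.isUnit
  set x := D *ᵥ F⁻¹ *ᵥ u
  set y := D *ᵥ F₁⁻¹ *ᵥ u
  have hkey : (D⁻¹ * F₁ * D⁻¹) *ᵥ (x - y) = (D⁻¹ * (F₁ - F) * D⁻¹) *ᵥ x := by
    simp only [x, y, mulVec_mulVec, ← sub_mulVec, conj_mul_sub_eq hDdet
      ((isUnit_iff_isUnit_det F).mp hF.isUnit) ((isUnit_iff_isUnit_det F₁).mp hF₁.isUnit)]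
  have hdiff : (1 - δ) * vnorm (x - y) ≤ δ * vnorm x :=
    calc (1 - δ) * vnorm (x - y)
        ≤ vnorm ((D⁻¹ * F₁ * D⁻¹) *ᵥ (x - y)) :=
          mul_vnorm_le_vnorm_mulVec (one_sub_mul_dotProduct_le hD.1 hDdet hLoewner h) _
      _ ≤ δ * vnorm x := by
          rw [hkey]
          exact (vnorm_mulVec_le _ _).trans (mul_le_mul_of_nonneg_right h (vnorm_nonneg _))
  have htri := abs_le.mp (abs_vnorm_sub_vnorm_le x y)
  have h1δ : 0 < 1 - δ := by linarith
  constructor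
  · rw [div_mul_eq_mul_div, div_le_iff₀ h1δ]
    nlinarith
  · rw [one_div_mul_eq_div, le_div_iff₀ h1δ]
    nlinarith
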